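/- Write the combinatorial Brianchon–Gram function of a Φ-tope τ ⊆ c(Φ) in the basis of quadrant monomials: X(Φ,τ) = Σ_{B ⊆ {1,…,N}} z(Φ,τ,B) ∏_{i∉B} p_i ∏_{i∈B} q_i with integer coefficients z(Φ,τ,B). Then: (i) z(Φ,τ,∅) = 1 and z(Φ,τ,{1,…,N}) = (−1)^{N−r}; (ii) if z(Φ,τ,B) ≠ 0, then the cone c(Φ_flip^B) is salient. -/

import Mathlib

open scoped Pointwise
open Classical MvPolynomial

noncomputable section

namespace AC

section Defs

variable {E : Type*} [AddCommGroup E] [Module ℝ E]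
variable {ι : Type*} [Fintype ι] [DecidableEq ι]

/-- Characteristic function of a set, with values in `ℝ`. -/
def charFn {α : Type*} (s : Set α) (x : α) : ℝ := if x ∈ s then 1 else 0

/-- The cone of nonnegative linear combinations of `{Ψ i : i ∈ I}`. -/
def coneOf (Ψ : ι → E) (I : Set ι) : Set E :=
  {v | ∃ c : ι → ℝ, (∀ i, 0 ≤ c i) ∧ (∀ i, i ∉ I → c i = 0) ∧ v = ∑ i, c i • Ψ i}

/-- The cone of nonnegative linear combinations of all the `Ψ i`. -/
def fullCone (Ψ : ι → E) : Set E := coneOf Ψ Set.univ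

/-- A cone is salient if it contains no line, i.e. `v, -v ∈ C → v = 0`. -/
def Salient (C : Set E) : Prop := ∀ v ∈ C, -v ∈ C → v = 0

/-- A wall: a hyperplane spanned by `dim E - 1` linearly independent members of `Ψ`. -/
def IsWall (Ψ : ι → E) (H : Submodule ℝ E) : Prop :=
  ∃ S : Finset ι, S.card + 1 = Module.finrank ℝ E ∧
    LinearIndependent ℝ (fun i : {x // x ∈ S} => Ψ i.1) ∧
    H = Submodule.span ℝ (Ψ '' ↑S)

/-- An element is regular when it lies on no wall. -/
def IsRegular (Ψ : ι → E) (μ : E) : Prop :=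
  ∀ H : Submodule ℝ E, IsWall Ψ H → μ ∉ H

/-- `G(Ψ,τ)`: generating subsets whose cone contains `τ`. -/
def Gens (Ψ : ι → E) (τ : Set E) : Set (Finset ι) :=
  {I | Submodule.span ℝ (Ψ '' ↑I) = ⊤ ∧ τ ⊆ coneOf Ψ ↑I}

/-- `I` is basic when `{Ψ i : i ∈ I}` is a basis of `E`. -/
def IsBasic (Ψ : ι → E) (I : Finset ι) : Prop :=
  LinearIndependent ℝ (fun i : {x // x ∈ I} => Ψ i.1) ∧
    Submodule.span ℝ (Ψ '' ↑I) = ⊤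

/-- `B(Ψ,τ)`: basic subsets whose cone contains `τ`. -/
def Bases (Ψ : ι → E) (τ : Set E) : Set (Finset ι) :=
  {I | IsBasic Ψ I ∧ τ ⊆ coneOf Ψ ↑I}

/-- The combinatorial Brianchon-Gram polynomial `X(Ψ,τ)`; the variable `Sum.inl i`
plays the role of `p i` and `Sum.inr i` plays the role of `q i`. -/
def BGpoly (Ψ : ι → E) (τ : Set E) : MvPolynomial (ι ⊕ ι) ℤ :=
  ∑ I : Finset ι,
    if I ∈ Gens Ψ τ then
      (-1 : MvPolynomial (ι ⊕ ι) ℤ) ^ (I.card - Module.finrank ℝ E) *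
        ((∏ j ∈ Iᶜ, X (Sum.inl j)) * ∏ i ∈ I, (X (Sum.inl i) + X (Sum.inr i)))
    else 0

/-- The geometric Brianchon-Gram function `X_geom(Ψ,τ)` on `ℝ^ι`. -/
def XGeom (Ψ : ι → E) (τ : Set E) (x : ι → ℝ) : ℝ :=
  ∑ I : Finset ι,
    if I ∈ Gens Ψ τ then
      (-1 : ℝ) ^ (I.card - Module.finrank ℝ E) *
        ∏ j ∈ Iᶜ, (if 0 ≤ x j then (1 : ℝ) else 0)
    else 0

/-- The affine subspace `V(Ψ,λ)`. -/
def affSlice (Ψ : ι → E) (lam : E) : Set (ι → ℝ) := {x | ∑ i, x i • Ψ i = lam}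

/-- The partition polytope `p(Ψ,λ)`. -/
def partPoly (Ψ : ι → E) (lam : E) : Set (ι → ℝ) :=
  {x | (∀ i, 0 ≤ x i) ∧ ∑ i, x i • Ψ i = lam}

/-- The semi-closed quadrant `Q_neg^B`. -/
def Qneg (B : Finset ι) : Set (ι → ℝ) :=
  {x | (∀ i ∈ B, x i < 0) ∧ ∀ i ∉ B, 0 ≤ x i}

/-- The flipped sequence `Ψ_flip^B`. -/
def flipSeq (Ψ : ι → E) (B : Finset ι) : ι → E := fun i => if i ∈ B then -Ψ i else Ψ i

/-- The zonotope `b(Ψ)`. -/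
def zonotope (Ψ : ι → E) : Set E :=
  {v | ∃ t : ι → ℝ, (∀ i, 0 ≤ t i ∧ t i ≤ 1) ∧ v = ∑ i, t i • Ψ i}

/-- `x ∈ ℝ^ι` is a lattice point when all its coordinates are integers. -/
def isLatticePt (x : ι → ℝ) : Prop := ∀ i, ∃ n : ℤ, x i = (n : ℝ)

/-- `v` lies in the open side of the hyperplane `H` containing `τ`. -/
def InOpenSideOf (H : Submodule ℝ E) (τ : Set E) (v : E) : Prop :=
  ∃ ξ : E →ₗ[ℝ] ℝ, (∀ h ∈ H, ξ h = 0) ∧ (∀ μ ∈ τ, 0 < ξ μ) ∧ 0 < ξ v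

/-- The change of variables exchanging `p i` and `q i` for `i ∈ A`. -/
def flipVar (A : Finset ι) : ι ⊕ ι → ι ⊕ ι
  | Sum.inl i => if i ∈ A then Sum.inr i else Sum.inl i
  | Sum.inr i => if i ∈ A then Sum.inl i else Sum.inr i

/-- The ring map `Flip_A`, exchanging `p i` and `q i` for `i ∈ A`. -/
def FlipPoly (A : Finset ι) (P : MvPolynomial (ι ⊕ ι) ℤ) : MvPolynomial (ι ⊕ ι) ℤ :=
  MvPolynomial.rename (flipVar A) P

/-- Value substituted for the variable `p i` in the substitution `Geom_A`. -/
def geomValA (A : Finset ι) (x : ι → ℝ) : ι → ℝ := fun i =>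
  if i ∈ A then (if 0 < x i then 1 else 0) else (if 0 ≤ x i then 1 else 0)

/-- The substitution `Geom_A`: substitute `1 - p i` for `q i`, then `[x i ≥ 0]`
for `p i` if `i ∉ A`, and `[x i > 0]` for `p i` if `i ∈ A`. -/
def GeomA (A : Finset ι) (P : MvPolynomial (ι ⊕ ι) ℤ) (x : ι → ℝ) : ℝ :=
  MvPolynomial.aeval (Sum.elim (geomValA A x) (fun i => 1 - geomValA A x i)) P

/-- The substitution `Geom`: `[x i ≥ 0]` for `p i`, `[x i < 0]` for `q i`. -/
def Geom (P : MvPolynomial (ι ⊕ ι) ℤ) (x : ι → ℝ) : ℝ := GeomA ∅ P x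

/-- The semi-closed flipped partition polytope `p_flip(Ψ,A,λ)`. -/
def pflip (Ψ : ι → E) (A : Finset ι) (lam : E) : Set (ι → ℝ) :=
  {x | (∑ i, x i • Ψ i = lam) ∧ (∀ i ∈ A, x i < 0) ∧ ∀ i ∉ A, 0 ≤ x i}

/-- The linear map `x ↦ ∑ i, x i • Ψ i`. -/
def Mmap (Ψ : ι → E) : (ι → ℝ) →ₗ[ℝ] E where
  toFun x := ∑ i, x i • Ψ i
  map_add' x y := by simp [add_smul, Finset.sum_add_distrib]
  map_smul' c x := by simp [smul_smul, Finset.smul_sum]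

/-- A polynomial function on a finite-dimensional real vector space. -/
def IsPolynomialFun {W : Type*} [AddCommGroup W] [Module ℝ W] (f : W → ℝ) : Prop :=
  ∃ (n : ℕ) (b : Module.Basis (Fin n) ℝ W) (p : MvPolynomial (Fin n) ℝ),
    ∀ v, f v = MvPolynomial.eval (fun i => b.repr v i) p

/-- `Λ` is a (full) lattice in `W`: the ℤ-span of some ℝ-basis. -/
def IsLattice {W : Type*} [AddCommGroup W] [Module ℝ W] (Λ : AddSubgroup W) : Prop :=
  ∃ b : Module.Basis (Fin (Module.finrank ℝ W)) ℝ W,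
    ∀ v, v ∈ Λ ↔ ∀ i, ∃ n : ℤ, b.repr v i = (n : ℝ)

/-- Quasi-polynomial function on the lattice `Λ`: polynomial on each coset of
a finite-index sublattice (here `D • Λ`). -/
def IsQuasiPolynomialOn {W : Type*} [AddCommGroup W] [Module ℝ W]
    (Λ : AddSubgroup W) (f : W → ℝ) : Prop :=
  ∃ D : ℕ, 0 < D ∧ ∀ lam₀ ∈ Λ, ∃ P : W → ℝ, IsPolynomialFun P ∧
    ∀ lam' ∈ Λ, f (lam₀ + D • lam') = P (lam₀ + D • lam')

end Defs

section TopeCones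

variable {E : Type*} [AddCommGroup E] [Module ℝ E] [TopologicalSpace E]
variable {ι : Type*} [Fintype ι]

/-- A tope: a connected component of the set of regular elements. -/
def IsTope (Ψ : ι → E) (τ : Set E) : Prop :=
  ∃ μ, IsRegular Ψ μ ∧ τ = connectedComponentIn {x | IsRegular Ψ x} μ

/-- Two topes are adjacent along the wall `H` when the intersection of their
closures is contained in `H` and spans `H`. -/
def Adjacent (Ψ : ι → E) (τ₁ τ₂ : Set E) (H : Submodule ℝ E) : Prop :=
  IsTope Ψ τ₁ ∧ IsTope Ψ τ₂ ∧ τ₁ ≠ τ₂ ∧ IsWall Ψ H ∧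
    closure τ₁ ∩ closure τ₂ ⊆ (H : Set E) ∧
    Submodule.span ℝ (closure τ₁ ∩ closure τ₂) = H

end TopeCones

/-!
Expanding the product, `z B` is the alternating sum of `(-1) ^ (|I| - r)` over the generating
`I ⊇ B` with `τ ⊆ c(Φ_I)`; for a regular `λ ∈ τ` these are exactly the `I` with
`λ ∈ c(Φ_I)`, and each such `I` contains a basis `J` with `λ ∈ c(Φ_J)`. Fix a generic cost
vector `c` and group the `I` according to the basis `J ⊆ I` that is optimal for the linear
program `min ⟨c, y⟩`, `y ≥ 0`, `∑ y i • φ i = λ`, supported on `I` (the simplex method,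
where `a` bounds the pivots). The fibre of `J` is the Boolean interval between `J ∪ B` and
`J ∪ P(J)`, `P(J)` the indices with positive reduced cost, so only the bases with
`P(J) = B \ J` contribute. For `B = ∅` this is the single optimal basis of the cost `-c`. If
`c(Φ_flip^B)` contains a line, there is a dependency among the `φ i` with the sign pattern of
`B`, and a cost positive on it leaves no contributing basis.
-/

section Coordinates

variable {E : Type*} [AddCommGroup E] [Module ℝ E] {ι : Type*} {Ψ : ι → E}
  {J : Finset ι} {v : E} {y : ι → ℝ}

lemma sum_smul_mem_span [Fintype ι] (hy : ∀ i ∉ J, y i = 0) :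
    ∑ i, y i • Ψ i ∈ Submodule.span ℝ (Ψ '' ↑J) := by
  refine Submodule.sum_mem _ fun i _ => ?_
  by_cases hi : i ∈ J
  · exact Submodule.smul_mem _ _ (Submodule.subset_span (Set.mem_image_of_mem Ψ hi))
  · simp [hy i hi]

lemma coneOf_subset_span [Fintype ι] : coneOf Ψ ↑J ⊆ Submodule.span ℝ (Ψ '' ↑J) := by
  rintro v ⟨y, -, hy, rfl⟩
  exact sum_smul_mem_span hy

lemma coneOf_mono [Fintype ι] {s t : Set ι} (h : s ⊆ t) : coneOf Ψ s ⊆ coneOf Ψ t := by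
  rintro v ⟨y, hy0, hy, rfl⟩
  exact ⟨y, hy0, fun i hi => hy i (fun his => hi (h his)), rfl⟩

def IsBasic.basis (hJ : IsBasic Ψ J) : Module.Basis J ℝ E :=
  .mk hJ.1 (by rw [← hJ.2, Set.image_eq_range]; rfl)

lemma IsBasic.card_eq (hJ : IsBasic Ψ J) : J.card = Module.finrank ℝ E := by
  rw [Module.finrank_eq_card_basis hJ.basis, Fintype.card_coe]

def coords (Ψ : ι → E) (J : Finset ι) : E →ₗ[ℝ] ι → ℝ :=
  if hJ : IsBasic Ψ J then
    LinearMap.pi fun i => if hi : i ∈ J then hJ.basis.coord ⟨i, hi⟩ else 0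
  else 0

lemma coords_of_notMem {i : ι} (hi : i ∉ J) : coords Ψ J v i = 0 := by
  unfold coords
  split_ifs <;> simp [hi]

lemma IsBasic.coords_of_mem (hJ : IsBasic Ψ J) {i : ι} (hi : i ∈ J) :
    coords Ψ J v i = hJ.basis.repr v ⟨i, hi⟩ := by
  simp [coords, hJ, hi]

lemma IsBasic.sum_coords_smul [Fintype ι] (hJ : IsBasic Ψ J) (v : E) :
    ∑ i, coords Ψ J v i • Ψ i = v := by
  rw [← Finset.sum_subset (Finset.subset_univ J) fun i _ hi => by rw [coords_of_notMem hi,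
    zero_smul], ← Finset.sum_coe_sort]
  conv_rhs => rw [← hJ.basis.sum_repr v]
  refine Finset.sum_congr rfl fun i _ => ?_
  rw [hJ.coords_of_mem i.2, IsBasic.basis, Module.Basis.mk_apply]

lemma IsBasic.coords_eq [Fintype ι] (hJ : IsBasic Ψ J) (hy : ∀ i ∉ J, y i = 0)
    (hv : ∑ i, y i • Ψ i = v) : coords Ψ J v = y := by
  have hsum : ∑ i ∈ J, (coords Ψ J v i - y i) • Ψ i = 0 := by
    rw [Finset.sum_subset (Finset.subset_univ J) fun i _ hi => by
      rw [coords_of_notMem hi, hy i hi, sub_zero, zero_smul]]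
    simp [sub_smul, hJ.sum_coords_smul, hv]
  funext i
  by_cases hi : i ∈ J
  · exact sub_eq_zero.1 (linearIndepOn_finset_iff.1 hJ.1 _ hsum i hi)
  · rw [coords_of_notMem hi, hy i hi]

lemma IsBasic.coords_nonneg [Fintype ι] (hJ : IsBasic Ψ J) (hv : v ∈ coneOf Ψ ↑J) (i : ι) :
    0 ≤ coords Ψ J v i := by
  obtain ⟨y, hy0, hy, rfl⟩ := hv
  rw [hJ.coords_eq hy rfl]
  exact hy0 i

lemma IsBasic.coords_ne_zero [Fintype ι] (hJ : IsBasic Ψ J) (hreg : IsRegular Ψ v) {i : ι}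
    (hi : i ∈ J) : coords Ψ J v i ≠ 0 := by
  classical
  intro h0
  have hind : LinearIndepOn ℝ Ψ ↑(J.erase i) :=
    LinearIndepOn.mono (hJ.1 : LinearIndepOn ℝ Ψ ↑J) (Finset.coe_subset.2 (J.erase_subset i))
  refine hreg _ ⟨J.erase i, ?_, hind, rfl⟩ ?_
  · rw [Finset.card_erase_add_one hi, hJ.card_eq]
  · rw [← hJ.sum_coords_smul v]
    refine sum_smul_mem_span fun j hj => ?_
    by_cases hji : j = i
    · rw [hji, h0]
    · exact coords_of_notMem fun hjJ => hj (Finset.mem_erase.2 ⟨hji, hjJ⟩)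

lemma IsBasic.coords_pos [Fintype ι] (hJ : IsBasic Ψ J) (hreg : IsRegular Ψ v)
    (hv : v ∈ coneOf Ψ ↑J) {i : ι} (hi : i ∈ J) : 0 < coords Ψ J v i :=
  (hJ.coords_nonneg hv i).lt_of_ne (hJ.coords_ne_zero hreg hi).symm

lemma IsBasic.exists_coords_pos [Fintype ι] (hJ : IsBasic Ψ J) {a : E →ₗ[ℝ] ℝ}
    (ha : ∀ i, 0 < a (Ψ i)) (k : ι) : ∃ j, 0 < coords Ψ J (Ψ k) j := by
  by_contra! h
  have hk := ha k
  rw [← hJ.sum_coords_smul (Ψ k), map_sum] at hk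
  simp only [map_smul, smul_eq_mul] at hk
  exact hk.not_ge (Finset.sum_nonpos fun i _ => mul_nonpos_of_nonpos_of_nonneg (h i) (ha i).le)

end Coordinates

section ReducedCosts

variable {E : Type*} [AddCommGroup E] [Module ℝ E] {ι : Type*} [Fintype ι] {Ψ : ι → E}
  {J : Finset ι} {v : E} {y c : ι → ℝ}

def reducedCost (Ψ : ι → E) (J : Finset ι) (k : ι) : Module.Dual ℝ (ι → ℝ) :=
  LinearMap.proj (R := ℝ) (φ := fun _ : ι => ℝ) k -
    ∑ i, coords Ψ J (Ψ k) i • LinearMap.proj (R := ℝ) (φ := fun _ : ι => ℝ) i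

lemma reducedCost_apply (k : ι) :
    reducedCost Ψ J k c = c k - ∑ i, coords Ψ J (Ψ k) i * c i := by
  simp [reducedCost]

def basicValue (Ψ : ι → E) (v : E) (c : ι → ℝ) (J : Finset ι) : ℝ :=
  ∑ i, coords Ψ J v i * c i

def positiveReducedCosts (Ψ : ι → E) (J : Finset ι) (c : ι → ℝ) : Finset ι :=
  Finset.univ.filter fun k => 0 < reducedCost Ψ J k c

lemma sum_mul_eq_basicValue_add (J : Finset ι) (hy : ∑ i, y i • Ψ i = v) :
    ∑ i, y i * c i = basicValue Ψ v c J + ∑ i, y i * reducedCost Ψ J i c := by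
  have hv : coords Ψ J v = ∑ i, y i • coords Ψ J (Ψ i) := by simp [← hy]
  simp only [basicValue, reducedCost_apply, hv, Finset.sum_apply, Pi.smul_apply, smul_eq_mul,
    mul_sub, Finset.sum_sub_distrib, Finset.mul_sum, Finset.sum_mul]
  rw [Finset.sum_comm]
  simp only [mul_assoc]
  ring

lemma IsBasic.reducedCost_of_mem [DecidableEq ι] (hJ : IsBasic Ψ J) {j : ι} (hj : j ∈ J) :
    reducedCost Ψ J j = 0 := by
  have hj1 : coords Ψ J (Ψ j) = Pi.single j 1 :=
    hJ.coords_eq (fun i hi => Pi.single_eq_of_ne (ne_of_mem_of_not_mem hj hi).symm _)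
      (by simp [Pi.single_apply])
  refine LinearMap.ext fun c => ?_
  simp [reducedCost_apply, hj1, Pi.single_apply]

lemma reducedCost_ne_zero [DecidableEq ι] {k : ι} (hk : k ∉ J) : reducedCost Ψ J k ≠ 0 := by
  intro h
  have := LinearMap.congr_fun h (Pi.single k 1)
  simp [reducedCost_apply, Pi.single_apply, coords_of_notMem hk] at this

def IsGeneric (Ψ : ι → E) (c : ι → ℝ) : Prop :=
  ∀ J k, k ∉ J → reducedCost Ψ J k c ≠ 0

lemma IsGeneric.neg (hc : IsGeneric Ψ c) : IsGeneric Ψ (-c) := fun J k hk => by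
  simpa using hc J k hk

lemma IsGeneric.mem_positiveReducedCosts_neg (hc : IsGeneric Ψ c) {k : ι} (hk : k ∉ J) :
    k ∈ positiveReducedCosts Ψ J (-c) ↔ k ∉ positiveReducedCosts Ψ J c := by
  have := hc J k hk
  simp only [positiveReducedCosts, Finset.mem_filter, Finset.mem_univ, true_and, map_neg,
    Left.neg_pos_iff, not_lt]
  exact ⟨le_of_lt, fun h => h.lt_of_ne this⟩

end ReducedCosts

lemma exists_mem_forall_apply_ne_zero {V : Type*} [NormedAddCommGroup V] [NormedSpace ℝ V]
    [MeasurableSpace V] [BorelSpace V] [FiniteDimensional ℝ V] {κ : Type*} [Finite κ]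
    {L : κ → Module.Dual ℝ V} (hL : ∀ k, L k ≠ 0) {U : Set V} (hU : IsOpen U)
    (hne : U.Nonempty) : ∃ c ∈ U, ∀ k, L k c ≠ 0 := by
  let μ : MeasureTheory.Measure V := MeasureTheory.Measure.addHaar
  have hnull : μ (⋃ k, (LinearMap.ker (L k) : Set V)) = 0 :=
    MeasureTheory.measure_iUnion_null fun k =>
      μ.addHaar_submodule _ (by simpa [LinearMap.ker_eq_top] using hL k)
  obtain ⟨c, hcU, hc⟩ := MeasureTheory.nonempty_of_measure_ne_zero (μ := μ)
    (s := U \ ⋃ k, (LinearMap.ker (L k) : Set V))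
    (by rw [MeasureTheory.measure_sdiff_null hnull]; exact (hU.measure_pos μ hne).ne')
  exact ⟨c, hcU, by simpa using hc⟩

lemma exists_isGeneric {E : Type*} [AddCommGroup E] [Module ℝ E] {ι : Type*} [Fintype ι]
    (Ψ : ι → E) {U : Set (ι → ℝ)} (hU : IsOpen U) (hne : U.Nonempty) :
    ∃ c ∈ U, IsGeneric Ψ c := by
  classical
  obtain ⟨c, hcU, hc⟩ := exists_mem_forall_apply_ne_zero
    (L := fun p : {p : Finset ι × ι // p.2 ∉ p.1} => reducedCost Ψ p.1.1 p.1.2)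
    (fun p => reducedCost_ne_zero p.2) hU hne
  exact ⟨c, hcU, fun J k hk => hc ⟨(J, k), hk⟩⟩

lemma exists_min_ratio {ι : Type*} [Fintype ι] {y g : ι → ℝ} (hy : ∀ i, 0 ≤ y i)
    (hg : ∃ i, 0 < g i) : ∃ j, 0 < g j ∧ ∀ i, y j / g j * g i ≤ y i := by
  classical
  obtain ⟨j, hj, hmin⟩ := (Finset.univ.filter fun i => 0 < g i).exists_min_image
    (fun i => y i / g i) (by simpa [Finset.filter_nonempty_iff] using hg)
  rw [Finset.mem_filter] at hj
  refine ⟨j, hj.2, fun i => ?_⟩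
  rcases le_or_gt (g i) 0 with hgi | hgi
  · exact (mul_nonpos_of_nonneg_of_nonpos (div_nonneg (hy j) hj.2.le) hgi).trans (hy i)
  · exact (le_div_iff₀ hgi).1 (hmin i (by simp [hgi]))

section Caratheodory

variable {E : Type*} [AddCommGroup E] [Module ℝ E] {ι : Type*} [Fintype ι] {Ψ : ι → E}
  {I : Finset ι} {v : E}

lemma exists_pos_dependency (hI : ¬ LinearIndepOn ℝ Ψ ↑I) :
    ∃ g : ι → ℝ, (∀ i ∉ I, g i = 0) ∧ ∑ i, g i • Ψ i = 0 ∧ ∃ i, 0 < g i := by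
  classical
  obtain ⟨f, hf, i, hi, hfi⟩ :
      ∃ f : ι → ℝ, ∑ i ∈ I, f i • Ψ i = 0 ∧ ∃ i ∈ I, f i ≠ 0 := by
    simpa [linearIndepOn_finset_iff] using hI
  let g : ι → ℝ := fun j => if j ∈ I then f j else 0
  have hg : ∑ j, g j • Ψ j = 0 := by simpa [g, ite_smul, Finset.sum_ite_mem] using hf
  rcases hfi.lt_or_gt with h | h
  · exact ⟨-g, fun j hj => by simp [g, hj], by simp [hg], i, by simp [g, hi, h]⟩
  · exact ⟨g, fun j hj => by simp [g, hj], hg, i, by simp [g, hi, h]⟩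

lemma exists_linearIndepOn_subset_of_mem_coneOf (hv : v ∈ coneOf Ψ ↑I) :
    ∃ S ⊆ I, LinearIndepOn ℝ Ψ ↑S ∧ v ∈ coneOf Ψ ↑S := by
  classical
  induction I using Finset.strongInduction with
  | H I ih =>
  by_cases hI : LinearIndepOn ℝ Ψ ↑I
  · exact ⟨I, subset_rfl, hI, hv⟩
  obtain ⟨g, hgI, hg, hgpos⟩ := exists_pos_dependency hI
  obtain ⟨y, hy0, hyI, rfl⟩ := hv
  obtain ⟨j, hj, hmin⟩ := exists_min_ratio hy0 hgpos
  have hjI : j ∈ I := by_contra fun h => hj.ne' (hgI j h)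
  have hv : ∑ i, y i • Ψ i ∈ coneOf Ψ ↑(I.erase j) := by
    refine ⟨fun i => y i - y j / g j * g i, fun i => sub_nonneg.2 (hmin i), fun i hi => ?_, ?_⟩
    · dsimp only
      by_cases hij : i = j
      · rw [hij, div_mul_cancel₀ _ hj.ne', sub_self]
      · have hiI : i ∉ I := fun h => hi (Finset.mem_erase.2 ⟨hij, h⟩)
        rw [hyI i hiI, hgI i hiI, mul_zero, sub_zero]
    · simp [sub_smul, Finset.sum_sub_distrib, mul_smul, ← Finset.smul_sum, hg]
  obtain ⟨S, hS, hSind, hSv⟩ := ih (I.erase j) (Finset.erase_ssubset hjI) hv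
  exact ⟨S, hS.trans (I.erase_subset j), hSind, hSv⟩

end Caratheodory

section Regular

variable {E : Type*} [AddCommGroup E] [Module ℝ E] [FiniteDimensional ℝ E] {ι : Type*}
  [Fintype ι] {Ψ : ι → E} {I J S : Finset ι} {v : E}

/-- If fewer than `dim E` vectors suffice, they can be completed inside `Ψ` to a wall through
`v`. -/
lemma IsRegular.isBasic_of_mem_span (hreg : IsRegular Ψ v)
    (hgen : Submodule.span ℝ (Set.range Ψ) = ⊤) (hS : LinearIndepOn ℝ Ψ ↑S)
    (hv : v ∈ Submodule.span ℝ (Ψ '' ↑S)) : IsBasic Ψ S := by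
  classical
  have hle : S.card ≤ Module.finrank ℝ E := by
    simpa using LinearIndependent.fintype_card_le_finrank hS
  suffices hcard : S.card = Module.finrank ℝ E by
    refine ⟨hS, ?_⟩
    rw [Set.image_eq_range]
    exact LinearIndependent.span_eq_top_of_card_eq_finrank' hS (by simpa using hcard)
  by_contra hlt
  obtain ⟨b, -, hSb, hspan, hb⟩ := exists_linearIndepOn_extension hS (Set.subset_univ _)
  have hbcard : Module.finrank ℝ E ≤ b.toFinset.card := by
    have hbspan : Submodule.span ℝ (Set.range fun x : b => Ψ x) = ⊤ := by
      rw [← Set.image_eq_range, eq_top_iff, ← hgen, ← Set.image_univ]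
      exact Submodule.span_le.2 hspan
    have h := finrank_range_le_card (R := ℝ) (fun x : b => Ψ x)
    rwa [Set.finrank, hbspan, finrank_top, ← Set.toFinset_card] at h
  obtain ⟨T, hST, hTb, hTcard⟩ := Finset.exists_subsuperset_card_eq
    (n := Module.finrank ℝ E - 1) (Set.subset_toFinset.2 hSb) (by omega) (by omega)
  exact hreg _ ⟨T, by omega, hb.mono (by simpa using hTb), rfl⟩
    (Submodule.span_mono (Set.image_mono (by simpa using hST)) hv)

lemma IsRegular.exists_isBasic_subset (hreg : IsRegular Ψ v)
    (hgen : Submodule.span ℝ (Set.range Ψ) = ⊤) (hv : v ∈ coneOf Ψ ↑I) :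
    ∃ J ⊆ I, IsBasic Ψ J ∧ v ∈ coneOf Ψ ↑J := by
  obtain ⟨S, hSI, hS, hSv⟩ := exists_linearIndepOn_subset_of_mem_coneOf hv
  exact ⟨S, hSI, hreg.isBasic_of_mem_span hgen hS (coneOf_subset_span hSv), hSv⟩

lemma IsRegular.isBasic_of_card_eq (hreg : IsRegular Ψ v)
    (hgen : Submodule.span ℝ (Set.range Ψ) = ⊤) (hv : v ∈ coneOf Ψ ↑I)
    (hI : I.card = Module.finrank ℝ E) : IsBasic Ψ I := by
  obtain ⟨J, hJI, hJ, -⟩ := hreg.exists_isBasic_subset hgen hv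
  rwa [← Finset.eq_of_subset_of_card_le hJI (by rw [hI, hJ.card_eq])]

end Regular

section Simplex

variable {E : Type*} [AddCommGroup E] [Module ℝ E] {ι : Type*}
  [Fintype ι] [DecidableEq ι] {Ψ : ι → E} {I J : Finset ι} {v : E} {c : ι → ℝ}

/-- The pivot step of the simplex method: an index with negative reduced cost enters the
basis, and the ratio test chooses the leaving index. -/
lemma IsRegular.exists_isBasic_basicValue_lt [FiniteDimensional ℝ E] (hreg : IsRegular Ψ v)
    (hgen : Submodule.span ℝ (Set.range Ψ) = ⊤) {a : E →ₗ[ℝ] ℝ}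
    (ha : ∀ i, 0 < a (Ψ i)) (hJ : IsBasic Ψ J) (hvJ : v ∈ coneOf Ψ ↑J) {k : ι}
    (hk : k ∉ J) (hc : reducedCost Ψ J k c < 0) :
    ∃ J' ⊆ insert k J, IsBasic Ψ J' ∧ v ∈ coneOf Ψ ↑J' ∧
      basicValue Ψ v c J' < basicValue Ψ v c J := by
  set q := coords Ψ J v
  set α := coords Ψ J (Ψ k)
  obtain ⟨j, hαj, hmin⟩ := exists_min_ratio (hJ.coords_nonneg hvJ) (hJ.exists_coords_pos ha k)
  have hjJ : j ∈ J := by_contra fun h => hαj.ne' (coords_of_notMem h)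
  set t := q j / α j
  have ht : 0 < t := div_pos (hJ.coords_pos hreg hvJ hjJ) hαj
  set y : ι → ℝ := q - t • α + Pi.single k t
  have hy0 : ∀ i, 0 ≤ y i := fun i => add_nonneg (sub_nonneg.2 (hmin i))
    (by rw [Pi.single_apply]; split_ifs <;> linarith)
  have hyv : ∑ i, y i • Ψ i = v := by
    simp [y, q, α, add_smul, sub_smul, mul_smul, Finset.sum_add_distrib, Finset.sum_sub_distrib,
      ← Finset.smul_sum, hJ.sum_coords_smul, Pi.single_apply]
  have hyJ' : ∀ i ∉ insert k (J.erase j), y i = 0 := by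
    intro i hi
    obtain ⟨hik, hi⟩ := by simpa using hi
    by_cases hij : i = j
    · subst hij
      have htα : t * α i = q i := div_mul_cancel₀ _ hαj.ne'
      simp [y, hik, htα]
    · simp [y, q, α, hik, coords_of_notMem (hi hij)]
  have hJ' : IsBasic Ψ (insert k (J.erase j)) := by
    refine hreg.isBasic_of_card_eq hgen ⟨y, hy0, hyJ', hyv.symm⟩ ?_
    rw [Finset.card_insert_of_notMem fun h => hk (Finset.mem_of_mem_erase h),
      Finset.card_erase_add_one hjJ, hJ.card_eq]
  refine ⟨_, Finset.insert_subset_insert _ (J.erase_subset j), hJ', ⟨y, hy0, hyJ', hyv.symm⟩,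
    ?_⟩
  have hval : basicValue Ψ v c (insert k (J.erase j)) =
      basicValue Ψ v c J + t * reducedCost Ψ J k c := by
    rw [basicValue, hJ'.coords_eq hyJ' hyv, sum_mul_eq_basicValue_add J hyv,
      Finset.sum_eq_single k]
    · simp [y, q, α, coords_of_notMem hk]
    · intro i _ hik
      by_cases hiJ : i ∈ J
      · simp [hJ.reducedCost_of_mem hiJ]
      · simp [y, q, α, coords_of_notMem hiJ, hik]
    · simp
  rw [hval]
  nlinarith

lemma IsRegular.basicValue_lt (hreg : IsRegular Ψ v) {J' : Finset ι} (hJ : IsBasic Ψ J)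
    (hJ' : IsBasic Ψ J') (hvJ' : v ∈ coneOf Ψ ↑J') (hne : J' ≠ J)
    (hpos : J' ⊆ J ∪ positiveReducedCosts Ψ J c) :
    basicValue Ψ v c J < basicValue Ψ v c J' := by
  obtain ⟨i, hiJ', hiJ⟩ : ∃ i ∈ J', i ∉ J := by
    by_contra! h
    exact hne (Finset.eq_of_subset_of_card_le h (by rw [hJ.card_eq, hJ'.card_eq]))
  have hrc : ∀ i ∈ J', i ∉ J → 0 < reducedCost Ψ J i c := fun i hi hiJ => by
    simpa [positiveReducedCosts, hiJ] using hpos hi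
  have hterm : ∀ i, 0 ≤ coords Ψ J' v i * reducedCost Ψ J i c := fun i => by
    by_cases hiJ : i ∈ J
    · simp [hJ.reducedCost_of_mem hiJ]
    by_cases hiJ' : i ∈ J'
    · exact mul_nonneg (hJ'.coords_nonneg hvJ' i) (hrc i hiJ' hiJ).le
    · simp [coords_of_notMem hiJ']
  show _ < ∑ i, coords Ψ J' v i * c i
  rw [sum_mul_eq_basicValue_add J (hJ'.sum_coords_smul v)]
  exact lt_add_of_pos_right _ (Finset.sum_pos' (fun i _ => hterm i)
    ⟨i, Finset.mem_univ i, mul_pos (hJ'.coords_pos hreg hvJ' hiJ') (hrc i hiJ' hiJ)⟩)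

/-- The optimal basis is the basis inside `I` minimising `basicValue`: at a negative reduced
cost it could be pivoted. -/
theorem IsRegular.existsUnique_optimal [FiniteDimensional ℝ E] (hreg : IsRegular Ψ v)
    (hgen : Submodule.span ℝ (Set.range Ψ) = ⊤) {a : E →ₗ[ℝ] ℝ}
    (ha : ∀ i, 0 < a (Ψ i)) (hc : IsGeneric Ψ c) (hv : v ∈ coneOf Ψ ↑I) :
    ∃! J, (IsBasic Ψ J ∧ v ∈ coneOf Ψ ↑J) ∧ J ⊆ I ∧
      I ⊆ J ∪ positiveReducedCosts Ψ J c := by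
  obtain ⟨J, hJmem, hmin⟩ := Finset.exists_min_image
    (Finset.univ.filter fun J => (IsBasic Ψ J ∧ v ∈ coneOf Ψ ↑J) ∧ J ⊆ I)
    (basicValue Ψ v c) (by
      obtain ⟨J, hJI, hJ⟩ := hreg.exists_isBasic_subset hgen hv
      exact ⟨J, by simp [hJ, hJI]⟩)
  simp only [Finset.mem_filter, Finset.mem_univ, true_and] at hJmem hmin
  obtain ⟨⟨hJ, hvJ⟩, hJI⟩ := hJmem
  refine ⟨J, ⟨⟨hJ, hvJ⟩, hJI, fun k hk => ?_⟩,
    fun J' ⟨⟨hJ', hvJ'⟩, hJ'I, hIJ'⟩ => ?_⟩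
  · by_cases hkJ : k ∈ J
    · exact Finset.mem_union_left _ hkJ
    have hpos : 0 < reducedCost Ψ J k c := by
      by_contra! hle
      obtain ⟨J', hJ'k, hJ', hvJ', hlt⟩ := hreg.exists_isBasic_basicValue_lt hgen ha hJ hvJ hkJ
        (hle.lt_of_ne (hc J k hkJ))
      exact hlt.not_ge (hmin J' ⟨⟨hJ', hvJ'⟩, hJ'k.trans (Finset.insert_subset hk hJI)⟩)
    exact Finset.mem_union_right _ (by simpa [positiveReducedCosts] using hpos)
  · by_contra hne
    exact (hreg.basicValue_lt hJ' hJ hvJ (Ne.symm hne) (hJI.trans hIJ')).not_ge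
      (hmin J' ⟨⟨hJ', hvJ'⟩, hJ'I⟩)

end Simplex

lemma sum_Icc_neg_one_pow_card {ι : Type*} [DecidableEq ι] (X Y : Finset ι) :
    ∑ I ∈ Finset.Icc X Y, (-1 : ℤ) ^ I.card = if X = Y then (-1) ^ X.card else 0 := by
  by_cases hXY : X ⊆ Y
  · have hdisj : ∀ s ∈ (Y \ X).powerset, Disjoint X s := fun s hs =>
      Finset.disjoint_of_subset_right (Finset.mem_powerset.1 hs) Finset.disjoint_sdiff
    rw [Finset.Icc_eq_image_powerset hXY, Finset.sum_image fun s hs s' hs' h => by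
      rw [← Finset.union_sdiff_cancel_left (hdisj s hs), h,
        Finset.union_sdiff_cancel_left (hdisj s' hs')]]
    rw [Finset.sum_congr rfl fun s hs => by rw [Finset.card_union_of_disjoint (hdisj s hs),
      pow_add], ← Finset.mul_sum, Finset.sum_powerset_neg_one_pow_card]
    have hYX : Y \ X = ∅ ↔ X = Y := by
      rw [Finset.sdiff_eq_empty_iff_subset]
      exact ⟨subset_antisymm hXY, fun h => h.ge⟩
    simp only [hYX, mul_ite, mul_one, mul_zero]
  · rw [Finset.Icc_eq_empty fun h => hXY h, if_neg fun h => hXY h.le, Finset.sum_empty]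

lemma exists_signed_dependency_of_not_salient {E : Type*} [AddCommGroup E] [Module ℝ E]
    {ι : Type*} [Fintype ι] [DecidableEq ι] {Ψ : ι → E} {B : Finset ι}
    (h : ¬ Salient (fullCone (flipSeq Ψ B))) :
    ∃ d : ι → ℝ, d ≠ 0 ∧ ∑ i, d i • Ψ i = 0 ∧
      ∀ i, (i ∈ B → d i ≤ 0) ∧ (i ∉ B → 0 ≤ d i) := by
  simp only [Salient, not_forall] at h
  obtain ⟨-, ⟨y₁, hy₁, -, rfl⟩, ⟨y₂, hy₂, -, h₂⟩, hv⟩ := h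
  have hsum : ∑ i, (y₁ i + y₂ i) • flipSeq Ψ B i = 0 := by
    simp [add_smul, Finset.sum_add_distrib, ← h₂]
  refine ⟨fun i => if i ∈ B then -(y₁ i + y₂ i) else y₁ i + y₂ i, fun hd => hv ?_, ?_,
    fun i => ⟨fun hi => ?_, fun hi => ?_⟩⟩
  · refine Finset.sum_eq_zero fun i _ => ?_
    have hi := congrFun hd i
    have : y₁ i = 0 := by split_ifs at hi <;> simp at hi <;> linarith [hy₁ i, hy₂ i]
    simp [this]
  · rw [← hsum]
    refine Finset.sum_congr rfl fun i _ => ?_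
    simp only [flipSeq]
    split_ifs <;> module
  · simp only [hi, if_true]; linarith [hy₁ i, hy₂ i]
  · simp only [hi, if_false]; linarith [hy₁ i, hy₂ i]

def signedConeCount {E : Type*} [AddCommGroup E] [Module ℝ E] {ι : Type*} [Fintype ι]
    [DecidableEq ι] (Ψ : ι → E) (v : E) (B : Finset ι) : ℤ :=
  ∑ I ∈ Finset.univ.filter (fun I : Finset ι => v ∈ coneOf Ψ ↑I ∧ B ⊆ I),
    (-1) ^ I.card

section Counting

variable {E : Type*} [AddCommGroup E] [Module ℝ E] [FiniteDimensional ℝ E] {ι : Type*}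
  [Fintype ι] [DecidableEq ι] {Ψ : ι → E} {v : E} {a : E →ₗ[ℝ] ℝ}

theorem IsRegular.signedConeCount_eq_sum_isBasic (hreg : IsRegular Ψ v)
    (hgen : Submodule.span ℝ (Set.range Ψ) = ⊤) (ha : ∀ i, 0 < a (Ψ i)) {c : ι → ℝ}
    (hc : IsGeneric Ψ c) (B : Finset ι) :
    signedConeCount Ψ v B =
      ∑ J ∈ Finset.univ.filter (fun J : Finset ι => IsBasic Ψ J ∧ v ∈ coneOf Ψ ↑J),
        if J ∪ B = J ∪ positiveReducedCosts Ψ J c then (-1) ^ (J ∪ B).card else 0 := by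
  simp_rw [signedConeCount, ← sum_Icc_neg_one_pow_card]
  rw [Finset.sum_comm'
    (t' := Finset.univ.filter fun I : Finset ι => v ∈ coneOf Ψ ↑I ∧ B ⊆ I)
    (s' := fun I => Finset.univ.filter fun J => (IsBasic Ψ J ∧ v ∈ coneOf Ψ ↑J) ∧
      J ⊆ I ∧ I ⊆ J ∪ positiveReducedCosts Ψ J c)]
  · refine Finset.sum_congr rfl fun I hI => ?_
    obtain ⟨J, hJ, huniq⟩ := hreg.existsUnique_optimal hgen ha hc (Finset.mem_filter.1 hI).2.1
    rw [Finset.sum_const, Finset.card_eq_one.2 ⟨J, Finset.eq_singleton_iff_unique_mem.2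
      ⟨by simpa using hJ, fun J' hJ' => huniq J' (by simpa using hJ')⟩⟩, one_smul]
  · intro J I
    simp only [Finset.mem_filter, Finset.mem_univ, true_and, Finset.mem_Icc,
      Finset.union_subset_iff]
    constructor
    · rintro ⟨⟨hJ, hvJ⟩, ⟨hJI, hBI⟩, hIJ⟩
      exact ⟨⟨⟨hJ, hvJ⟩, hJI, hIJ⟩, coneOf_mono (Finset.coe_subset.2 hJI) hvJ, hBI⟩
    · rintro ⟨⟨hJv, hJI, hIJ⟩, -, hBI⟩
      exact ⟨hJv, ⟨hJI, hBI⟩, hIJ⟩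

theorem IsRegular.signedConeCount_empty (hreg : IsRegular Ψ v)
    (hgen : Submodule.span ℝ (Set.range Ψ) = ⊤) (ha : ∀ i, 0 < a (Ψ i))
    (hv : v ∈ coneOf Ψ ↑(Finset.univ : Finset ι)) :
    signedConeCount Ψ v ∅ = (-1) ^ Module.finrank ℝ E := by
  obtain ⟨c, -, hc⟩ := exists_isGeneric Ψ isOpen_univ Set.univ_nonempty
  obtain ⟨J₀, ⟨hJ₀, -, hJ₀univ⟩, huniq⟩ := hreg.existsUnique_optimal hgen ha hc.neg hv
  have hopt : ∀ J, IsBasic Ψ J → v ∈ coneOf Ψ ↑J →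
      (J = J ∪ positiveReducedCosts Ψ J c ↔ J = J₀) := fun J hJ hvJ => by
    rw [eq_comm, Finset.union_eq_left]
    refine ⟨fun h => huniq J ⟨⟨hJ, hvJ⟩, Finset.subset_univ J, fun k _ => ?_⟩, ?_⟩
    · by_cases hkJ : k ∈ J
      · exact Finset.mem_union_left _ hkJ
      · exact Finset.mem_union_right _ ((hc.mem_positiveReducedCosts_neg hkJ).2 (mt (@h k) hkJ))
    · rintro rfl k hk
      by_contra hkJ
      have := hJ₀univ (Finset.mem_univ k)
      rw [Finset.mem_union, hc.mem_positiveReducedCosts_neg hkJ] at this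
      exact this.elim hkJ (· hk)
  rw [hreg.signedConeCount_eq_sum_isBasic hgen ha hc, Finset.sum_eq_single_of_mem J₀
    (by simpa using hJ₀)]
  · rw [Finset.union_empty, if_pos ((hopt J₀ hJ₀.1 hJ₀.2).2 rfl), hJ₀.1.card_eq]
  · intro J hJ hne
    simp only [Finset.mem_filter, Finset.mem_univ, true_and] at hJ
    rw [Finset.union_empty, if_neg (mt (hopt J hJ.1 hJ.2).1 hne)]

/-- Take the generic cost `c` positive on a dependency `d` with the sign pattern of `B`. If
`positiveReducedCosts Ψ J c` agreed with `B` outside `J`, then `∑ d i * c i` would equal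
`∑ d i * reducedCost Ψ J i c`, whose terms are all `≤ 0`. -/
theorem IsRegular.signedConeCount_eq_zero (hreg : IsRegular Ψ v)
    (hgen : Submodule.span ℝ (Set.range Ψ) = ⊤) (ha : ∀ i, 0 < a (Ψ i)) {B : Finset ι}
    (hB : ¬ Salient (fullCone (flipSeq Ψ B))) :
    signedConeCount Ψ v B = 0 := by
  obtain ⟨d, hd0, hdΨ, hdB⟩ := exists_signed_dependency_of_not_salient hB
  have hdd : 0 < ∑ i, d i * d i := by
    obtain ⟨i, hi⟩ := Function.ne_iff.1 hd0
    exact Finset.sum_pos' (fun i _ => mul_self_nonneg (d i))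
      ⟨i, Finset.mem_univ i, mul_self_pos.2 hi⟩
  obtain ⟨c, hcd : 0 < ∑ i, d i * c i, hc⟩ := exists_isGeneric Ψ
    (U := {c | 0 < ∑ i, d i * c i}) (isOpen_lt continuous_const (by fun_prop)) ⟨d, hdd⟩
  rw [hreg.signedConeCount_eq_sum_isBasic hgen ha hc]
  refine Finset.sum_eq_zero fun J hJ => if_neg fun hJB => hcd.not_ge ?_
  have hJ : IsBasic Ψ J := (Finset.mem_filter.1 hJ).2.1
  rw [sum_mul_eq_basicValue_add J hdΨ]
  simp only [basicValue, map_zero, Pi.zero_apply, zero_mul, Finset.sum_const_zero, zero_add]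
  refine Finset.sum_nonpos fun i _ => ?_
  by_cases hiJ : i ∈ J
  · simp [hJ.reducedCost_of_mem hiJ]
  have hmem : i ∈ B ↔ 0 < reducedCost Ψ J i c := by
    simpa [hiJ, positiveReducedCosts] using congrArg (i ∈ ·) hJB
  by_cases hiB : i ∈ B
  · exact mul_nonpos_of_nonpos_of_nonneg ((hdB i).1 hiB) (hmem.1 hiB).le
  · exact mul_nonpos_of_nonneg_of_nonpos ((hdB i).2 hiB) (not_lt.1 (mt hmem.2 hiB))

end Counting

section Coefficients

variable {E : Type*} [AddCommGroup E] [Module ℝ E] {ι : Type*} [Fintype ι] [DecidableEq ι]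

def quadrantPoint (B : Finset ι) : ι ⊕ ι → ℤ :=
  Sum.elim (fun i => if i ∉ B then 1 else 0) (fun i => if i ∈ B then 1 else 0)

lemma eval_quadrantPoint_monomial (B B' : Finset ι) :
    eval (quadrantPoint B) ((∏ i ∈ B'ᶜ, X (Sum.inl i)) * ∏ i ∈ B', X (Sum.inr i)) =
      if B' = B then 1 else 0 := by
  simp only [map_mul, map_prod, eval_X, quadrantPoint, Sum.elim_inl, Sum.elim_inr,
    Finset.prod_boole, Finset.mem_compl]
  by_cases h : B' = B
  · simp [h]
  · rw [if_neg h, boole_mul, ← ite_and, if_neg]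
    refine fun ⟨h₁, h₂⟩ => h (subset_antisymm h₂ fun i hi => ?_)
    by_contra hiB'
    exact h₁ i hiB' hi

lemma eval_quadrantPoint_term (B I : Finset ι) :
    eval (quadrantPoint B)
        ((∏ j ∈ Iᶜ, X (Sum.inl j)) * ∏ i ∈ I, (X (Sum.inl i) + X (Sum.inr i))) =
      if B ⊆ I then 1 else 0 := by
  have hone : ∀ i, (if i ∉ B then (1 : ℤ) else 0) + (if i ∈ B then 1 else 0) = 1 := by
    intro i
    split_ifs <;> simp_all
  simp only [map_mul, map_prod, map_add, eval_X, quadrantPoint, Sum.elim_inl, Sum.elim_inr,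
    hone, Finset.prod_const_one, mul_one, Finset.prod_boole, Finset.mem_compl]
  congr 1
  exact propext ⟨fun h i hi => by_contra fun hiI => h i hiI hi, fun h i hiI hi => hiI (h hi)⟩

lemma coeff_eq_sum_gens {Ψ : ι → E} {τ : Set E} {z : Finset ι → ℤ}
    (hz : BGpoly Ψ τ = ∑ B : Finset ι,
      C (z B) * ((∏ i ∈ Bᶜ, X (Sum.inl i)) * ∏ i ∈ B, X (Sum.inr i))) (B : Finset ι) :
    z B = ∑ I ∈ Finset.univ.filter (fun I => I ∈ Gens Ψ τ ∧ B ⊆ I),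
      (-1) ^ (I.card - Module.finrank ℝ E) := by
  have h := congrArg (eval (quadrantPoint B)) hz
  rw [map_sum] at h
  simp_rw [map_mul (eval _) (C _), eval_C, eval_quadrantPoint_monomial, mul_boole,
    Finset.sum_ite_eq', Finset.mem_univ, if_true] at h
  rw [← h, BGpoly, map_sum, Finset.sum_filter]
  refine Finset.sum_congr rfl fun I _ => ?_
  by_cases hI : I ∈ Gens Ψ τ
  · rw [if_pos hI, map_mul, eval_quadrantPoint_term, map_pow, map_neg, map_one, mul_boole]
    simp [hI]
  · simp [hI]

end Coefficients

lemma neg_one_pow_sub_eq_mul {m n : ℕ} (h : m ≤ n) :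
    (-1 : ℤ) ^ (n - m) = (-1) ^ m * (-1) ^ n := by
  obtain ⟨k, rfl⟩ := Nat.exists_eq_add_of_le h
  rw [Nat.add_sub_cancel_left, pow_add, ← mul_assoc, ← pow_add, ← two_mul, pow_mul,
    neg_one_sq, one_pow, one_mul]

lemma IsTope.isRegular {E : Type*} [AddCommGroup E] [Module ℝ E] [TopologicalSpace E] {ι : Type*}
    {Ψ : ι → E} {τ : Set E} {v : E} (hτ : IsTope Ψ τ) (hv : v ∈ τ) : IsRegular Ψ v := by
  obtain ⟨μ, -, rfl⟩ := hτ
  exact connectedComponentIn_subset _ _ hv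

section Topes

variable {F : Type*} [NormedAddCommGroup F] [NormedSpace ℝ F] [FiniteDimensional ℝ F]
  {ι : Type*} [Fintype ι] {Ψ : ι → F} {J : Finset ι} {τ : Set F} {v : F}

/-- The coordinates in a basis of `Ψ` do not vanish at regular points, so by connectedness
their signs are constant on `τ`. -/
lemma IsBasic.subset_coneOf_of_isPreconnected (hJ : IsBasic Ψ J) (hτ : IsPreconnected τ)
    (hreg : ∀ μ ∈ τ, IsRegular Ψ μ) (hv : v ∈ τ) (hvJ : v ∈ coneOf Ψ ↑J) :
    τ ⊆ coneOf Ψ ↑J := by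
  intro μ hμ
  refine ⟨coords Ψ J μ, fun i => ?_, fun i hi => coords_of_notMem hi,
    (hJ.sum_coords_smul μ).symm⟩
  by_cases hi : i ∈ J
  swap
  · rw [coords_of_notMem hi]
  by_contra! hneg
  have hcont : ContinuousOn (fun w => coords Ψ J w i) τ :=
    ((continuous_apply i).comp (coords Ψ J).continuous_of_finiteDimensional).continuousOn
  obtain ⟨w, hw, h0⟩ :=
    hτ.intermediate_value hμ hv hcont ⟨hneg.le, hJ.coords_nonneg hvJ i⟩
  exact hJ.coords_ne_zero (hreg w hw) hi h0

lemma IsTope.mem_gens_iff (hτ : IsTope Ψ τ) (hv : v ∈ τ)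
    (hgen : Submodule.span ℝ (Set.range Ψ) = ⊤) {I : Finset ι} :
    I ∈ Gens Ψ τ ↔ v ∈ coneOf Ψ ↑I := by
  refine ⟨fun hI => hI.2 hv, fun hvI => ?_⟩
  obtain ⟨J, hJI, hJ, hvJ⟩ := (hτ.isRegular hv).exists_isBasic_subset hgen hvI
  have hτJ : τ ⊆ coneOf Ψ ↑J := by
    obtain ⟨μ, -, rfl⟩ := hτ
    exact hJ.subset_coneOf_of_isPreconnected isPreconnected_connectedComponentIn
      (fun w hw => connectedComponentIn_subset _ _ hw) hv hvJ
  exact ⟨eq_top_iff.2 (hJ.2.ge.trans (Submodule.span_mono (Set.image_mono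
    (by simpa using hJI)))), hτJ.trans (coneOf_mono (by simpa using hJI))⟩

lemma IsTope.coeff_eq [DecidableEq ι] (hτ : IsTope Ψ τ) (hv : v ∈ τ)
    (hgen : Submodule.span ℝ (Set.range Ψ) = ⊤) {z : Finset ι → ℤ}
    (hz : BGpoly Ψ τ = ∑ B : Finset ι, C (z B) *
      ((∏ i ∈ Bᶜ, X (Sum.inl i)) * ∏ i ∈ B, X (Sum.inr i)))
    (B : Finset ι) :
    z B = (-1) ^ Module.finrank ℝ F * signedConeCount Ψ v B := by
  rw [coeff_eq_sum_gens hz, signedConeCount, Finset.mul_sum]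
  refine Finset.sum_congr (by simp_rw [hτ.mem_gens_iff hv hgen]) fun I hI => ?_
  obtain ⟨J, hJI, hJ, -⟩ :=
    (hτ.isRegular hv).exists_isBasic_subset hgen (Finset.mem_filter.1 hI).2.1
  exact neg_one_pow_sub_eq_mul (hJ.card_eq ▸ Finset.card_le_card hJI)

end Topes

theorem quadrant_coefficients_general
    {F : Type*} [NormedAddCommGroup F] [NormedSpace ℝ F] [FiniteDimensional ℝ F]
    {N : ℕ} (Φ : Fin N → F)
    (hgen : Submodule.span ℝ (Set.range Φ) = ⊤)
    (hsal : ∃ a : F →ₗ[ℝ] ℝ, ∀ i, 0 < a (Φ i))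
    (τ : Set F) (hτ : IsTope Φ τ) (hτc : τ ⊆ fullCone Φ)
    (z : Finset (Fin N) → ℤ)
    (hz : BGpoly Φ τ =
      ∑ B : Finset (Fin N),
        MvPolynomial.C (z B) *
          ((∏ i ∈ Bᶜ, X (Sum.inl i)) * ∏ i ∈ B, X (Sum.inr i))) :
    z ∅ = 1 ∧
    z Finset.univ = (-1) ^ (N - Module.finrank ℝ F) ∧
    ∀ B, z B ≠ 0 → Salient (fullCone (flipSeq Φ B)) := by
  obtain ⟨a, ha⟩ := hsal
  obtain ⟨lam, hreg, hτlam⟩ := id hτ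
  have hlam : lam ∈ τ := hτlam ▸ mem_connectedComponentIn hreg
  have hlam_univ : lam ∈ coneOf Φ ↑(Finset.univ : Finset (Fin N)) := by
    simpa [fullCone] using hτc hlam
  refine ⟨?_, ?_, fun B hB => by_contra fun hns => hB ?_⟩
  · rw [hτ.coeff_eq hlam hgen hz, hreg.signedConeCount_empty hgen ha hlam_univ, ← pow_add,
      ← two_mul, pow_mul, neg_one_sq, one_pow]
  · have huniv : (Finset.univ : Finset (Fin N)) ∈ Gens Φ τ :=
      ⟨by simpa using hgen, by simpa [fullCone] using hτc⟩
    rw [coeff_eq_sum_gens hz, Finset.sum_eq_single_of_mem Finset.univ (by simp [huniv])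
      fun I hI hne => absurd (Finset.univ_subset_iff.1 (Finset.mem_filter.1 hI).2.2) hne]
    simp
  · rw [hτ.coeff_eq hlam hgen hz, hreg.signedConeCount_eq_zero hgen ha hns, mul_zero]

/-- Coefficients of `X(Φ,τ)` in the basis of quadrant monomials: the
coefficient of the empty set is `1`, the coefficient of the full set is
`(-1)^{N-r}`, and nonzero coefficients only occur for `B` with `c(Φ_flip^B)`
salient. -/
theorem quadrant_coefficients
    {F : Type*} [NormedAddCommGroup F] [NormedSpace ℝ F] [FiniteDimensional ℝ F]
    {N : ℕ} (Φ : Fin N → F)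
    (hne : ∀ i, Φ i ≠ 0)
    (hgen : Submodule.span ℝ (Set.range Φ) = ⊤)
    (hsal : ∃ a : F →ₗ[ℝ] ℝ, ∀ i, 0 < a (Φ i))
    (τ : Set F) (hτ : IsTope Φ τ) (hτc : τ ⊆ fullCone Φ)
    (z : Finset (Fin N) → ℤ)
    (hz : BGpoly Φ τ =
      ∑ B : Finset (Fin N),
        MvPolynomial.C (z B) *
          ((∏ i ∈ Bᶜ, X (Sum.inl i)) * ∏ i ∈ B, X (Sum.inr i))) :
    z ∅ = 1 ∧
    z Finset.univ = (-1) ^ (N - Module.finrank ℝ F) ∧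
    ∀ B, z B ≠ 0 → Salient (fullCone (flipSeq Φ B)) :=
  quadrant_coefficients_general Φ hgen hsal τ hτ hτc z hz

end AC
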